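/- arXiv:0807.2275 — 2 statements merged into one kernel-verified Lean document; each statement's English description precedes it below -/
import Mathlib

section
/- For every z ∈ ℂ and every u ∈ ℂ, the directional derivative of T(z) = z/(1+|z|) in direction u satisfies |∂_u T(z)| ≤ |u|/(1+|z|) ≤ |u|. -/
/-!
Over the common denominator `2 (1 + |z|)²`, the numerator `u (2 + |z|) - ū z² / |z|` has norm at
most `|u| (2 + |z|) + |u| |z| = 2 |u| (1 + |z|)` by the triangle inequality.
-/

/-- The directional derivative of `T z = z / (1 + |z|)` at `z` in direction `u`. -/
noncomputable def dirDerivT (z u : ℂ) : ℂ :=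
  if z = 0 then u else
    u * (2 + (‖z‖ : ℂ)) / (2 * (1 + (‖z‖ : ℂ))^2)
    - (starRingEnd ℂ) u * z^2 / (2 * (‖z‖ : ℂ) * (1 + (‖z‖ : ℂ))^2)

open ComplexConjugate

lemma dirDerivT_of_ne_zero {z : ℂ} (hz : z ≠ 0) (u : ℂ) :
    dirDerivT z u =
      (u * (2 + ‖z‖) - conj u * z ^ 2 / ‖z‖) / (2 * (1 + (‖z‖ : ℂ)) ^ 2) := by
  rw [dirDerivT, if_neg hz, sub_div, div_div, mul_assoc 2]
  congr 2
  ring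

lemma norm_dirDerivT_numerator_le (z u : ℂ) :
    ‖u * (2 + ‖z‖) - conj u * z ^ 2 / ‖z‖‖ ≤ 2 * ‖u‖ * (1 + ‖z‖) := by
  have h₁ : ‖u * (2 + ‖z‖)‖ = ‖u‖ * (2 + ‖z‖) := by
    rw [norm_mul, ← Complex.ofReal_ofNat, ← Complex.ofReal_add,
      Complex.norm_of_nonneg (by positivity)]
  have h₂ : ‖conj u * z ^ 2 / ‖z‖‖ = ‖u‖ * ‖z‖ := by
    rw [norm_div, norm_mul, Complex.norm_conj, norm_pow, Complex.norm_real, norm_norm,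
      mul_div_assoc, sq, mul_self_div_self]
  calc _ ≤ ‖u * (2 + ‖z‖)‖ + ‖conj u * z ^ 2 / ‖z‖‖ := norm_sub_le _ _
    _ = 2 * ‖u‖ * (1 + ‖z‖) := by rw [h₁, h₂]; ring

theorem dirDerivT_bound (z u : ℂ) :
    ‖dirDerivT z u‖ ≤ ‖u‖ / (1 + ‖z‖) ∧
    ‖u‖ / (1 + ‖z‖) ≤ ‖u‖ := by
  refine ⟨?_, div_le_self (norm_nonneg u) (by simp)⟩
  rcases eq_or_ne z 0 with rfl | hz
  · simp [dirDerivT]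
  have hden : ‖2 * (1 + (‖z‖ : ℂ)) ^ 2‖ = 2 * (1 + ‖z‖) ^ 2 := by
    rw [← Complex.ofReal_one, ← Complex.ofReal_add, ← Complex.ofReal_pow,
      ← Complex.ofReal_ofNat, ← Complex.ofReal_mul, Complex.norm_of_nonneg (by positivity)]
  calc ‖dirDerivT z u‖ ≤ 2 * ‖u‖ * (1 + ‖z‖) / (2 * (1 + ‖z‖) ^ 2) := by
        rw [dirDerivT_of_ne_zero hz, norm_div, hden]
        gcongr
        exact norm_dirDerivT_numerator_le z u
    _ = ‖u‖ / (1 + ‖z‖) := by field_simp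
end

section
/- The Fréchet derivative of T(z) = z/(1+|z|), as an ℝ-linear map on ℝ² ≅ ℂ, is jointly continuous in z: the map z ↦ T'_z is continuous from ℂ into the space of continuous ℝ-linear maps ℂ → ℂ with the operator norm. -/
/-!
On a real inner product space, `x ↦ (1 + ‖x‖)⁻¹ • x` is `x + O(‖x‖²)` near the origin, so its
derivative there is the identity; away from the origin the chain rule, with `d‖·‖ = ⟪x / ‖x‖, ·⟫`,
gives `u ↦ (1 + ‖x‖)⁻¹ • u - ((1 + ‖x‖)² ‖x‖)⁻¹ ⟪x, u⟫ • x`, which also equals the identity at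
`x = 0`. The only term not obviously continuous, `‖x‖⁻¹ • rankOne ℝ x x`, has operator norm
`‖x‖`, hence tends to `0` at the origin.
-/

noncomputable def T : ℂ → ℂ := fun z => z / (1 + (‖z‖ : ℂ))

open Asymptotics Filter Topology InnerProductSpace

section RadialShrink

variable {E : Type*} [NormedAddCommGroup E] [InnerProductSpace ℝ E]

theorem hasFDerivAt_norm_of_ne_zero {x : E} (hx : x ≠ 0) :
    HasFDerivAt (‖·‖) (‖x‖⁻¹ • innerSL ℝ x) x := by
  have h := (hasStrictFDerivAt_norm_sq x).hasFDerivAt.sqrt (by positivity)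
  simp only [Real.sqrt_sq (norm_nonneg _)] at h
  convert h using 1
  ext u
  simp only [smul_apply, coe_innerSL_apply, smul_eq_mul, one_div,
    mul_inv_rev, nsmul_eq_mul, Nat.cast_ofNat]
  field_simp

theorem norm_inv_norm_smul_rankOne_self (x : E) : ‖‖x‖⁻¹ • rankOne ℝ x x‖ = ‖x‖ := by
  rcases eq_or_ne x 0 with rfl | hx
  · simp
  rw [norm_smul, norm_rankOne, norm_inv, norm_norm]
  field_simp

theorem continuous_inv_norm_smul_rankOne_self :
    Continuous fun x : E => ‖x‖⁻¹ • rankOne ℝ x x := by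
  refine continuous_iff_continuousAt.2 fun x => ?_
  rcases eq_or_ne x 0 with rfl | hx
  · rw [ContinuousAt, norm_zero, inv_zero, zero_smul, tendsto_zero_iff_norm_tendsto_zero]
    simpa only [norm_inv_norm_smul_rankOne_self, norm_zero] using continuous_norm.tendsto (0 : E)
  · have hrankOne : Continuous fun x : E => rankOne ℝ x x := by
      simp only [rankOne_def]
      exact (ContinuousLinearMap.smulRightL ℝ E E).continuous₂.comp₂ (innerSL ℝ).continuous
        continuous_id
    exact ((continuousAt_inv₀ (norm_ne_zero_iff.2 hx)).comp continuous_norm.continuousAt).smul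
      hrankOne.continuousAt

noncomputable def radialShrink (x : E) : E := (1 + ‖x‖)⁻¹ • x

noncomputable def radialShrinkDeriv (x : E) : E →L[ℝ] E :=
  (1 + ‖x‖)⁻¹ • ContinuousLinearMap.id ℝ E - ((1 + ‖x‖) ^ 2)⁻¹ • ‖x‖⁻¹ • rankOne ℝ x x

@[simp]
theorem radialShrinkDeriv_zero : radialShrinkDeriv (0 : E) = ContinuousLinearMap.id ℝ E := by
  simp [radialShrinkDeriv]

theorem continuous_radialShrinkDeriv : Continuous (radialShrinkDeriv : E → E →L[ℝ] E) := by
  have h : ∀ x : E, 1 + ‖x‖ ≠ 0 := fun x => by positivity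
  unfold radialShrinkDeriv
  exact ((continuous_const.add continuous_norm).inv₀ h).smul continuous_const |>.sub <|
    (((continuous_const.add continuous_norm).pow 2).inv₀ fun x => pow_ne_zero 2 (h x)).smul
      continuous_inv_norm_smul_rankOne_self

theorem hasFDerivAt_radialShrink_zero :
    HasFDerivAt radialShrink (ContinuousLinearMap.id ℝ E) 0 := by
  rw [hasFDerivAt_iff_isLittleO_nhds_zero]
  refine IsBigO.trans_isLittleO (g := fun h : E => ‖h‖ ^ 2) ?_ (isLittleO_norm_pow_id one_lt_two)
  refine .of_norm_le fun h => ?_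
  have hsub : (1 + ‖h‖)⁻¹ • h - h = -(‖h‖ / (1 + ‖h‖)) • h := by
    rw [neg_smul, eq_neg_iff_add_eq_zero, sub_add_eq_add_sub, ← add_smul]
    field_simp
    simp
  simp only [radialShrink, zero_add, norm_zero, smul_zero, sub_zero, ContinuousLinearMap.id_apply]
  calc ‖(1 + ‖h‖)⁻¹ • h - h‖ = ‖h‖ / (1 + ‖h‖) * ‖h‖ := by
        rw [hsub, norm_smul, norm_neg, Real.norm_of_nonneg (by positivity)]
    _ ≤ ‖h‖ * ‖h‖ := by
        gcongr
        exact div_le_self (norm_nonneg h) (le_add_of_nonneg_right (norm_nonneg h))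
    _ = ‖h‖ ^ 2 := (sq _).symm

theorem hasFDerivAt_radialShrink_of_ne_zero {x : E} (hx : x ≠ 0) :
    HasFDerivAt radialShrink (radialShrinkDeriv x) x := by
  have hpos : 0 < 1 + ‖x‖ := by positivity
  have hinv := (hasDerivAt_inv hpos.ne').comp_hasFDerivAt x
    ((hasFDerivAt_norm_of_ne_zero hx).const_add 1)
  refine (hinv.fun_smul (hasFDerivAt_id x)).congr_fderiv ?_
  ext u
  simp [radialShrinkDeriv, smul_smul, mul_assoc, sub_eq_add_neg]

theorem hasFDerivAt_radialShrink (x : E) : HasFDerivAt radialShrink (radialShrinkDeriv x) x := by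
  rcases eq_or_ne x 0 with rfl | hx
  · simpa only [radialShrinkDeriv_zero] using hasFDerivAt_radialShrink_zero
  · exact hasFDerivAt_radialShrink_of_ne_zero hx

end RadialShrink

theorem T_eq_radialShrink : T = radialShrink := by
  ext z
  simp [T, radialShrink, Complex.real_smul, div_eq_inv_mul]

theorem T_fderiv_continuous :
    ∃ D : ℂ → (ℂ →L[ℝ] ℂ), (∀ z : ℂ, HasFDerivAt T (D z) z) ∧ Continuous D := by
  rw [T_eq_radialShrink]
  exact ⟨radialShrinkDeriv, hasFDerivAt_radialShrink, continuous_radialShrinkDeriv⟩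
end
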